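/- arXiv:1210.1853 — 3 statements merged into one kernel-verified Lean document; each statement's English description precedes it below -/
import Mathlib

section
/- Let d ≥ 1. The constant 2/d in the logarithmic Sobolev inequality on S^d is sharp: for every c < 2/d there exists a smooth, non-constant function u on a neighborhood of S^d with ∫_{S^d} |∇_{S^d} u|² dμ > 0 such that ∫_{S^d} u² log( u² / ∫_{S^d} u² dμ ) dμ > c ∫_{S^d} |∇_{S^d} u|² dμ. -/
open MeasureTheory Metric Set InnerProductSpace
open scoped Pointwise

noncomputable section

/-- The uniform probability measure on the unit sphere in `EuclideanSpace ℝ (Fin n)`,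
i.e. the surface measure normalized to be a probability measure. -/
def sphereMu (n : ℕ) : Measure (sphere (0 : EuclideanSpace ℝ (Fin n)) 1) :=
  ((volume : Measure (EuclideanSpace ℝ (Fin n))).toSphere Set.univ)⁻¹ •
    (volume : Measure (EuclideanSpace ℝ (Fin n))).toSphere

/-- The tangential gradient of `u` at `ξ`: `∇u(ξ) − (∇u(ξ)·ξ) ξ`. -/
def tangGrad (n : ℕ) (u : EuclideanSpace ℝ (Fin n) → ℝ) (ξ : EuclideanSpace ℝ (Fin n)) :
    EuclideanSpace ℝ (Fin n) :=
  gradient u ξ - (inner ℝ (gradient u ξ) ξ : ℝ) • ξ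

namespace SphereLS

variable {n : ℕ}

local notation "E" n => EuclideanSpace ℝ (Fin n)

/-- restriction of a linear isometry equiv to the unit sphere -/
def sphMap (e : (E n) ≃ₗᵢ[ℝ] (E n)) (ξ : sphere (0 : E n) 1) : sphere (0 : E n) 1 :=
  ⟨e ξ, by simp [mem_sphere_iff_norm, e.norm_map, mem_sphere_iff_norm.mp ξ.2]⟩

lemma sphMap_continuous (e : (E n) ≃ₗᵢ[ℝ] (E n)) : Continuous (sphMap e) :=
  Continuous.subtype_mk (e.continuous.comp continuous_subtype_val) _

lemma map_sphMap_toSphere (e : (E n) ≃ₗᵢ[ℝ] (E n)) :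
    Measure.map (sphMap e) (volume : Measure (E n)).toSphere
      = (volume : Measure (E n)).toSphere := by
  ext s hs
  rw [Measure.map_apply (sphMap_continuous e).measurable hs,
    Measure.toSphere_apply' _ (hs.preimage (sphMap_continuous e).measurable),
    Measure.toSphere_apply' _ hs]
  congr 1
  have hset : (Ioo (0:ℝ) 1 • (Subtype.val '' (sphMap e ⁻¹' s)))
      = ⇑e ⁻¹' (Ioo (0:ℝ) 1 • (Subtype.val '' s)) := by
    ext x
    simp only [Set.mem_smul, Set.mem_preimage, Set.mem_image]
    constructor
    · rintro ⟨r, hr, y, ⟨ξ, hξ, rfl⟩, rfl⟩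
      exact ⟨r, hr, e ξ, ⟨sphMap e ξ, hξ, rfl⟩, (e.map_smul r ξ).symm⟩
    · rintro ⟨r, hr, y, ⟨η, hη, rfl⟩, hx⟩
      refine ⟨r, hr, e.symm η, ⟨sphMap e.symm η, ?_, rfl⟩, ?_⟩
      · show sphMap e (sphMap e.symm η) ∈ s
        have : sphMap e (sphMap e.symm η) = η := Subtype.ext (by simp [sphMap])
        rw [this]; exact hη
      · apply e.injective
        rw [e.map_smul, e.apply_symm_apply]
        exact hx
  rw [hset]
  have := (e.measurePreserving (F := E n)).map_eq
  calc volume (⇑e ⁻¹' (Ioo (0:ℝ) 1 • (Subtype.val '' s)))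
      = (Measure.map (e.toHomeomorph.toMeasurableEquiv) volume) (Ioo (0:ℝ) 1 • (Subtype.val '' s)) := by
        rw [MeasurableEquiv.map_apply]; rfl
    _ = volume (Ioo (0:ℝ) 1 • (Subtype.val '' s)) := by
        rw [show (⇑e.toHomeomorph.toMeasurableEquiv : (E n) → E n) = ⇑e from rfl, this]

lemma integral_comp_sphMap (e : (E n) ≃ₗᵢ[ℝ] (E n)) (g : sphere (0 : E n) 1 → ℝ)
    (hg : Continuous g) :
    ∫ ξ, g (sphMap e ξ) ∂(sphereMu n) = ∫ ξ, g ξ ∂(sphereMu n) := by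
  rw [sphereMu, integral_smul_measure, integral_smul_measure]
  congr 1
  conv_rhs => rw [← map_sphMap_toSphere e]
  rw [integral_map (sphMap_continuous e).aemeasurable]
  exact hg.aestronglyMeasurable

lemma isProbabilityMeasure_sphereMu (hn : 0 < n) : IsProbabilityMeasure (sphereMu n) := by
  constructor
  rw [sphereMu, Measure.smul_apply, smul_eq_mul]
  refine ENNReal.inv_mul_cancel ?_ (measure_ne_top _ _)
  rw [Measure.toSphere_apply_univ]
  rw [finrank_euclideanSpace_fin]
  exact mul_ne_zero (by exact_mod_cast hn.ne') (measure_ball_pos _ _ one_pos).ne'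

lemma log_ge_aux {x y : ℝ} (hx : 0 < x) (hy : 0 < y) :
    (x - y) / x ≤ Real.log x - Real.log y := by
  have h := Real.log_le_sub_one_of_pos (x := y / x) (by positivity)
  rw [Real.log_div hy.ne' hx.ne'] at h
  have : y / x - 1 = -((x - y) / x) := by field_simp; ring
  linarith [h]

lemma ent_pointwise {a m M : ℝ} (ha : 0 < a) (hm : 0 < m) (haM : a ≤ M) (hmM : m ≤ M) :
    (a - m) + (a - m) ^ 2 / (2 * M) ≤ a * Real.log (a / m) := by
  have hM : 0 < M := lt_of_lt_of_le hm hmM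
  set F : ℝ → ℝ := fun t => t * (Real.log t - Real.log m) - (t - m) - (t - m) ^ 2 / (2 * M) with hF
  have hderiv : ∀ t : ℝ, 0 < t →
      HasDerivAt F (Real.log t - Real.log m - (t - m) / M) t := by
    intro t ht
    have h1 : HasDerivAt (fun t : ℝ => t * (Real.log t - Real.log m))
        (1 * (Real.log t - Real.log m) + t * t⁻¹) t :=
      (hasDerivAt_id t).mul ((Real.hasDerivAt_log ht.ne').sub_const _)
    have h2 : HasDerivAt (fun t : ℝ => (t - m) ^ 2 / (2 * M))
        ((2 * (t - m) ^ 1 * 1) / (2 * M)) t :=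
      (((hasDerivAt_id t).sub_const m).pow 2).div_const _
    have := (h1.sub (((hasDerivAt_id t).sub_const m))).sub h2
    convert this using 1
    · rfl
    · rfl
    · rfl
    rw [mul_inv_cancel₀ ht.ne']
    ring
  have hcont : ∀ s : Set ℝ, s ⊆ Ioi 0 → ContinuousOn F s := by
    intro s hs
    apply ContinuousOn.sub
    apply ContinuousOn.sub
    · exact (continuousOn_id.mul ((Real.continuousOn_log.mono (by
        intro x hx; exact ne_of_gt (hs hx))).sub continuousOn_const))
    · fun_prop
    · fun_prop
  have hFm : F m = 0 := by simp [hF]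
  have key : 0 ≤ F a := by
    rcases le_total m a with hma | ham
    · have hmono : MonotoneOn F (Icc m a) := by
        apply monotoneOn_of_deriv_nonneg (convex_Icc m a)
          (hcont _ (fun x hx => lt_of_lt_of_le hm hx.1))
        · intro t ht
          rw [interior_Icc] at ht
          exact (hderiv t (lt_trans hm ht.1)).differentiableAt.differentiableWithinAt
        · intro t ht
          rw [interior_Icc] at ht
          have ht0 : 0 < t := lt_trans hm ht.1
          rw [(hderiv t ht0).deriv]
          have h1 : (t - m) / t ≤ Real.log t - Real.log m := log_ge_aux ht0 hm
          have h2 : (t - m) / M ≤ (t - m) / t :=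
            div_le_div_of_nonneg_left (by linarith [ht.1]) ht0 (le_trans (le_of_lt ht.2) haM)
          linarith
      have := hmono (left_mem_Icc.2 hma) (right_mem_Icc.2 hma) hma
      rw [hFm] at this; exact this
    · have hanti : AntitoneOn F (Icc a m) := by
        apply antitoneOn_of_deriv_nonpos (convex_Icc a m)
          (hcont _ (fun x hx => lt_of_lt_of_le ha hx.1))
        · intro t ht
          rw [interior_Icc] at ht
          exact (hderiv t (lt_trans ha ht.1)).differentiableAt.differentiableWithinAt
        · intro t ht
          rw [interior_Icc] at ht
          have ht0 : 0 < t := lt_trans ha ht.1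
          rw [(hderiv t ht0).deriv]
          have h1 : (m - t) / m ≤ Real.log m - Real.log t := log_ge_aux hm ht0
          have h2 : (m - t) / M ≤ (m - t) / m :=
            div_le_div_of_nonneg_left (by linarith [ht.2]) hm hmM
          have h3 : (t - m) / M = -((m - t) / M) := by ring
          have h4 : (t - m) / m = -((m - t) / m) := by ring
          linarith
      have := hanti (left_mem_Icc.2 ham) (right_mem_Icc.2 ham) ham
      rw [hFm] at this; exact this
  have hlog : Real.log (a / m) = Real.log a - Real.log m := Real.log_div ha.ne' hm.ne'
  rw [hlog]
  simp only [hF] at key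
  linarith

lemma grad_affine (ε : ℝ) (v x : E n) :
    gradient (fun y => 1 + ε * (inner ℝ v y : ℝ)) x = ε • v := by
  apply HasGradientAt.gradient
  rw [hasGradientAt_iff_hasFDerivAt]
  have hdual : toDual ℝ (E n) (ε • v) = ε • innerSL ℝ v := by
    ext y
    simp [toDual_apply_apply, real_inner_smul_left]
  rw [hdual]
  have h0 : HasFDerivAt (fun y : E n => (inner ℝ v y : ℝ))
      (innerSL ℝ v) x := (innerSL ℝ v).hasFDerivAt
  exact (h0.const_mul ε).const_add 1

lemma contDiff_affine (ε : ℝ) (v : E n) :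
    ContDiff ℝ (⊤ : ℕ∞) (fun y : E n => 1 + ε * (inner ℝ v y : ℝ)) :=
  contDiff_const.add (contDiff_const.mul ((innerSL ℝ v).contDiff))

lemma tangGrad_norm_sq (ε : ℝ) (v : E n) (hv : ‖v‖ = 1)
    (ξ : E n) (hξ : ‖ξ‖ = 1) :
    ‖tangGrad n (fun y => 1 + ε * (inner ℝ v y : ℝ)) ξ‖ ^ 2
      = ε ^ 2 * (1 - (inner ℝ v ξ : ℝ) ^ 2) := by
  rw [tangGrad, grad_affine]
  set t : ℝ := inner ℝ v ξ with ht
  have h1 : (inner ℝ (ε • v) ξ : ℝ) = ε * t := real_inner_smul_left v ξ ε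
  rw [h1, norm_sub_sq_real, norm_smul, norm_smul]
  have h2 : (inner ℝ (ε • v) ((ε * t) • ξ) : ℝ) = ε * (ε * t) * t := by
    rw [real_inner_smul_left, real_inner_smul_right]; ring
  rw [h2, hv, hξ, Real.norm_eq_abs, Real.norm_eq_abs, mul_pow, mul_pow, sq_abs, sq_abs]
  ring

end SphereLS
set_option maxHeartbeats 1000000 in
theorem sphere_logSobolev_sharp (d : ℕ) (hd : 1 ≤ d) (c : ℝ) (hc : c < 2 / d) :
    ∃ u : EuclideanSpace ℝ (Fin (d + 1)) → ℝ,
      ContDiff ℝ (⊤ : ℕ∞) u ∧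
      (∃ ξ ∈ sphere (0 : EuclideanSpace ℝ (Fin (d + 1))) 1,
        ∃ η ∈ sphere (0 : EuclideanSpace ℝ (Fin (d + 1))) 1, u ξ ≠ u η) ∧
      0 < ∫ ξ : sphere (0 : EuclideanSpace ℝ (Fin (d + 1))) 1,
            ‖tangGrad (d + 1) u ξ‖ ^ 2 ∂(sphereMu (d + 1)) ∧
      ∫ ξ : sphere (0 : EuclideanSpace ℝ (Fin (d + 1))) 1,
          (u ξ) ^ 2 * Real.log ((u ξ) ^ 2 /
            ∫ η : sphere (0 : EuclideanSpace ℝ (Fin (d + 1))) 1,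
              (u η) ^ 2 ∂(sphereMu (d + 1))) ∂(sphereMu (d + 1)) >
        c * ∫ ξ : sphere (0 : EuclideanSpace ℝ (Fin (d + 1))) 1,
              ‖tangGrad (d + 1) u ξ‖ ^ 2 ∂(sphereMu (d + 1)) := by
  classical
  have hn : 0 < d + 1 := Nat.succ_pos d
  haveI hprob : IsProbabilityMeasure (sphereMu (d+1)) := SphereLS.isProbabilityMeasure_sphereMu hn
  set μ := sphereMu (d+1) with hμdef
  have hd1 : (1:ℝ) ≤ (d:ℝ) := by exact_mod_cast hd
  have hdpos : (0:ℝ) < (d:ℝ) := by linarith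
  have hcd : c * d < 2 := by
    have := mul_lt_mul_of_pos_right hc hdpos
    rwa [div_mul_cancel₀] at this
    exact hdpos.ne'
  set ε : ℝ := min (1/2) ((2 - c*d)/8) with hεdef
  have hε0 : 0 < ε := lt_min (by norm_num) (by linarith)
  have hεhalf : ε ≤ 1/2 := min_le_left _ _
  have hε8 : ε ≤ (2 - c*d)/8 := min_le_right _ _
  set v : EuclideanSpace ℝ (Fin (d+1)) := EuclideanSpace.single (0 : Fin (d+1)) (1:ℝ) with hvdef
  have hvnorm : ‖v‖ = 1 := by simp [hvdef]
  set u : EuclideanSpace ℝ (Fin (d+1)) → ℝ := fun y => 1 + ε * (inner ℝ v y : ℝ) with hudef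
  set X : sphere (0 : EuclideanSpace ℝ (Fin (d+1))) 1 → ℝ := fun ξ => (ξ : EuclideanSpace ℝ (Fin (d+1))) 0 with hXdef
  have hXinner : ∀ ξ : sphere (0 : EuclideanSpace ℝ (Fin (d+1))) 1,
      (inner ℝ v (ξ : EuclideanSpace ℝ (Fin (d+1))) : ℝ) = X ξ := by
    intro ξ
    simp [hvdef, hXdef, EuclideanSpace.inner_single_left]
  have huX : ∀ ξ : sphere (0 : EuclideanSpace ℝ (Fin (d+1))) 1,
      u (ξ : EuclideanSpace ℝ (Fin (d+1))) = 1 + ε * X ξ := by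
    intro ξ; rw [hudef]; simp only; rw [hXinner ξ]
  have hXci : ∀ i : Fin (d+1), Continuous
      (fun ξ : sphere (0 : EuclideanSpace ℝ (Fin (d+1))) 1 =>
        (ξ : EuclideanSpace ℝ (Fin (d+1))) i) :=
    fun i => (continuous_apply i).comp ((PiLp.continuous_ofLp 2 _).comp continuous_subtype_val)
  have hXcont : Continuous X := hXci 0
  have hnormξ : ∀ ξ : sphere (0 : EuclideanSpace ℝ (Fin (d+1))) 1,
      ‖(ξ : EuclideanSpace ℝ (Fin (d+1)))‖ = 1 := fun ξ => by
    have := ξ.2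
    rwa [mem_sphere_iff_norm, sub_zero] at this
  have hsum : ∀ ξ : sphere (0 : EuclideanSpace ℝ (Fin (d+1))) 1,
      ∑ i, ((ξ : EuclideanSpace ℝ (Fin (d+1))) i)^2 = 1 := by
    intro ξ
    have h := hnormξ ξ
    have h2 : ‖(ξ : EuclideanSpace ℝ (Fin (d+1)))‖^2 = 1 := by rw [h]; norm_num
    rw [EuclideanSpace.norm_eq] at h2
    rw [Real.sq_sqrt (by positivity)] at h2
    simpa [Real.norm_eq_abs, sq_abs] using h2
  have hX2le : ∀ ξ : sphere (0 : EuclideanSpace ℝ (Fin (d+1))) 1, (X ξ)^2 ≤ 1 := by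
    intro ξ
    rw [← hsum ξ]
    exact Finset.single_le_sum
      (f := fun i => ((ξ : EuclideanSpace ℝ (Fin (d+1))) i)^2)
      (fun i _ => sq_nonneg _) (Finset.mem_univ 0)
  have hXabs : ∀ ξ : sphere (0 : EuclideanSpace ℝ (Fin (d+1))) 1, |X ξ| ≤ 1 := by
    intro ξ
    have := hX2le ξ
    rw [abs_le]
    constructor <;> nlinarith
  have hInt : ∀ g : sphere (0 : EuclideanSpace ℝ (Fin (d+1))) 1 → ℝ, Continuous g →
      Integrable g μ := by
    intro g hg
    exact hg.integrable_of_hasCompactSupport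
      (IsCompact.of_isClosed_subset isCompact_univ (isClosed_tsupport g) (subset_univ _))
  -- odd moments vanish
  have hodd : ∀ k : ℕ, Odd k → ∫ ξ, (X ξ)^k ∂μ = 0 := by
    intro k hk
    have he := SphereLS.integral_comp_sphMap (n := d+1) (LinearIsometryEquiv.neg ℝ)
      (fun ξ => (X ξ)^k) (hXcont.pow k)
    have hcomp : (fun ξ : sphere (0 : EuclideanSpace ℝ (Fin (d+1))) 1 =>
        (X (SphereLS.sphMap (LinearIsometryEquiv.neg ℝ) ξ))^k) = fun ξ => -((X ξ)^k) := by
      funext ξ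
      have : X (SphereLS.sphMap (LinearIsometryEquiv.neg ℝ) ξ) = -(X ξ) := by
        simp [SphereLS.sphMap, hXdef]
      rw [this, hk.neg_pow]
    rw [hcomp, integral_neg] at he
    linarith [he]
  have A1 : ∫ ξ, X ξ ∂μ = 0 := by
    have := hodd 1 odd_one
    simpa using this
  have A3 : ∫ ξ, (X ξ)^3 ∂μ = 0 := hodd 3 (by decide)
  set V := ∫ ξ, (X ξ)^2 ∂μ with hVdef
  set T := ∫ ξ, (X ξ)^4 ∂μ with hTdef
  -- coordinate symmetry
  have hswap : ∀ i : Fin (d+1), ∫ ξ, ((ξ : EuclideanSpace ℝ (Fin (d+1))) i)^2 ∂μ = V := by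
    intro i
    set e := LinearIsometryEquiv.piLpCongrLeft 2 ℝ ℝ (Equiv.swap (0 : Fin (d+1)) i) with hedef
    have he := SphereLS.integral_comp_sphMap (n := d+1) e (fun ξ => (X ξ)^2) (hXcont.pow 2)
    have hcomp : (fun ξ : sphere (0 : EuclideanSpace ℝ (Fin (d+1))) 1 =>
        (X (SphereLS.sphMap e ξ))^2)
        = fun ξ : sphere (0 : EuclideanSpace ℝ (Fin (d+1))) 1 =>
            ((ξ : EuclideanSpace ℝ (Fin (d+1))) i)^2 := by
      funext ξ
      have : X (SphereLS.sphMap e ξ) = (ξ : EuclideanSpace ℝ (Fin (d+1))) i := by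
        show (e (ξ : EuclideanSpace ℝ (Fin (d+1)))) 0 = (ξ : EuclideanSpace ℝ (Fin (d+1))) i
        rw [hedef, LinearIsometryEquiv.piLpCongrLeft_apply]
        simp only [Equiv.piCongrLeft'_apply, Equiv.symm_swap]
        rw [Equiv.swap_apply_left]
      rw [this]
    rw [hcomp] at he
    rw [he]
  have hVval : V = 1/((d:ℝ)+1) := by
    have hsumint : ∫ ξ, (∑ i, ((ξ : EuclideanSpace ℝ (Fin (d+1))) i)^2) ∂μ
        = ∑ i : Fin (d+1), ∫ ξ, ((ξ : EuclideanSpace ℝ (Fin (d+1))) i)^2 ∂μ :=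
      integral_finset_sum _ (fun i _ => hInt _ ((hXci i).pow 2))
    have h1 : ∫ ξ, (∑ i, ((ξ : EuclideanSpace ℝ (Fin (d+1))) i)^2) ∂μ = 1 := by
      have : (fun ξ : sphere (0 : EuclideanSpace ℝ (Fin (d+1))) 1 =>
          ∑ i, ((ξ : EuclideanSpace ℝ (Fin (d+1))) i)^2) = fun _ => (1:ℝ) := funext hsum
      rw [this, integral_const]
      simp
    rw [hsumint] at h1
    simp only [hswap] at h1
    rw [Finset.sum_const, Finset.card_univ, Fintype.card_fin, nsmul_eq_mul] at h1
    have hd1' : ((d:ℝ)+1) ≠ 0 := by positivity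
    push_cast at h1
    rw [eq_div_iff hd1']
    linarith [h1]
  have hV0 : 0 < V := by rw [hVval]; positivity
  have hV1 : V ≤ 1 := by
    rw [hVval, div_le_one (by positivity)]
    linarith
  clear_value T V X u v ε μ
  -- polynomial integral helper
  have hpoly : ∀ a b c' e' f : ℝ,
      ∫ ξ, (a + b * X ξ + c' * (X ξ)^2 + e' * (X ξ)^3 + f * (X ξ)^4) ∂μ
        = a + c' * V + f * T := by
    intro a b c' e' f
    have i0 : Integrable (fun _ : sphere (0 : EuclideanSpace ℝ (Fin (d+1))) 1 => a) μ :=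
      integrable_const _
    have i1 : Integrable (fun ξ => b * X ξ) μ := hInt _ ((continuous_const.mul hXcont))
    have i2 : Integrable (fun ξ => c' * (X ξ)^2) μ := hInt _ ((continuous_const.mul (hXcont.pow 2)))
    have i3 : Integrable (fun ξ => e' * (X ξ)^3) μ := hInt _ ((continuous_const.mul (hXcont.pow 3)))
    have i4 : Integrable (fun ξ => f * (X ξ)^4) μ := hInt _ ((continuous_const.mul (hXcont.pow 4)))
    have i01 : Integrable (fun ξ => a + b * X ξ) μ := i0.add i1
    have i012 : Integrable (fun ξ => a + b * X ξ + c' * (X ξ)^2) μ := i01.add i2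
    have i0123 : Integrable (fun ξ => a + b * X ξ + c' * (X ξ)^2 + e' * (X ξ)^3) μ := i012.add i3
    have s4 : ∫ ξ, (a + b * X ξ + c' * (X ξ)^2 + e' * (X ξ)^3 + f * (X ξ)^4) ∂μ
        = (∫ ξ, (a + b * X ξ + c' * (X ξ)^2 + e' * (X ξ)^3) ∂μ) + ∫ ξ, f * (X ξ)^4 ∂μ :=
      integral_add i0123 i4
    have s3 : ∫ ξ, (a + b * X ξ + c' * (X ξ)^2 + e' * (X ξ)^3) ∂μ
        = (∫ ξ, (a + b * X ξ + c' * (X ξ)^2) ∂μ) + ∫ ξ, e' * (X ξ)^3 ∂μ :=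
      integral_add i012 i3
    have s2 : ∫ ξ, (a + b * X ξ + c' * (X ξ)^2) ∂μ
        = (∫ ξ, (a + b * X ξ) ∂μ) + ∫ ξ, c' * (X ξ)^2 ∂μ :=
      integral_add i01 i2
    have s1 : ∫ ξ, (a + b * X ξ) ∂μ
        = (∫ _ξ, a ∂μ) + ∫ ξ, b * X ξ ∂μ :=
      integral_add i0 i1
    have c0 : ∫ _ξ, a ∂μ = a := by
      rw [integral_const]; simp
    have c1 : ∫ ξ, b * X ξ ∂μ = 0 := by
      rw [integral_const_mul, A1, mul_zero]
    have c2 : ∫ ξ, c' * (X ξ)^2 ∂μ = c' * V := by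
      rw [integral_const_mul, ← hVdef]
    have c3 : ∫ ξ, e' * (X ξ)^3 ∂μ = 0 := by
      rw [integral_const_mul, A3, mul_zero]
    have c4 : ∫ ξ, f * (X ξ)^4 ∂μ = f * T := by
      rw [integral_const_mul, ← hTdef]
    rw [s4, s3, s2, s1, c0, c1, c2, c3, c4]
    ring
  -- variance of X^2 nonneg
  have hTV : V^2 ≤ T := by
    have h0 : (0:ℝ) ≤ ∫ ξ, ((X ξ)^2 - V)^2 ∂μ := integral_nonneg (fun ξ => sq_nonneg _)
    have heq : (fun ξ : sphere (0 : EuclideanSpace ℝ (Fin (d+1))) 1 => ((X ξ)^2 - V)^2)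
        = fun ξ => (V^2) + (0:ℝ) * X ξ + (-(2*V)) * (X ξ)^2 + (0:ℝ) * (X ξ)^3 + (1:ℝ) * (X ξ)^4 :=
      funext fun ξ => by ring
    rw [heq, hpoly] at h0
    nlinarith [h0]
  -- the mean of u^2
  have hm : ∫ ξ, (u ξ)^2 ∂μ = 1 + ε^2 * V := by
    have heq : (fun ξ : sphere (0 : EuclideanSpace ℝ (Fin (d+1))) 1 => (u ξ)^2)
        = fun ξ => (1:ℝ) + (2*ε) * X ξ + (ε^2) * (X ξ)^2 + (0:ℝ) * (X ξ)^3 + (0:ℝ) * (X ξ)^4 :=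
      funext fun ξ => by rw [huX ξ]; ring
    rw [heq, hpoly]
    ring
  -- second moment of u^2
  have hQ : ∫ ξ, ((u ξ)^2 - (1 + ε^2 * V))^2 ∂μ = 4*ε^2*V + ε^4*(T - V^2) := by
    have heq : (fun ξ : sphere (0 : EuclideanSpace ℝ (Fin (d+1))) 1 =>
        ((u ξ)^2 - (1 + ε^2 * V))^2)
        = fun ξ => (ε^4*V^2) + (-(4*ε^3*V)) * X ξ + (4*ε^2 - 2*ε^4*V) * (X ξ)^2
            + (4*ε^3) * (X ξ)^3 + (ε^4) * (X ξ)^4 :=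
      funext fun ξ => by rw [huX ξ]; ring
    rw [heq, hpoly]
    ring
  -- energy
  have hGpt : ∀ ξ : sphere (0 : EuclideanSpace ℝ (Fin (d+1))) 1,
      ‖tangGrad (d+1) u ξ‖^2 = ε^2*(1 - (X ξ)^2) := by
    intro ξ
    rw [hudef, SphereLS.tangGrad_norm_sq ε v hvnorm _ (hnormξ ξ), hXinner ξ]
  have hG : ∫ ξ, ‖tangGrad (d+1) u ξ‖^2 ∂μ = ε^2*(1-V) := by
    have heq : (fun ξ : sphere (0 : EuclideanSpace ℝ (Fin (d+1))) 1 =>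
        ‖tangGrad (d+1) u ξ‖^2)
        = fun ξ => (ε^2) + (0:ℝ)*X ξ + (-(ε^2))*(X ξ)^2 + (0:ℝ)*(X ξ)^3 + (0:ℝ)*(X ξ)^4 :=
      funext fun ξ => by rw [hGpt ξ]; ring
    rw [heq, hpoly]
    ring
  -- bounds on u
  have hub : ∀ ξ : sphere (0 : EuclideanSpace ℝ (Fin (d+1))) 1,
      1/2 ≤ u ξ ∧ u ξ ≤ 1 + ε := by
    intro ξ
    rw [huX ξ]
    have h := hXabs ξ
    rw [abs_le] at h
    constructor <;> nlinarith [hε0, hεhalf, h.1, h.2]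
  have hm0 : (0:ℝ) < 1 + ε^2*V := by nlinarith [mul_pos (pow_pos hε0 2) hV0]
  have hM0 : (0:ℝ) < (1+ε)^2 := by positivity
  have hmM : 1 + ε^2*V ≤ (1+ε)^2 := by nlinarith [hV1, hε0, sq_nonneg ε]
  have haM : ∀ ξ : sphere (0 : EuclideanSpace ℝ (Fin (d+1))) 1, (u ξ)^2 ≤ (1+ε)^2 := by
    intro ξ
    have h := hub ξ
    have h2 : u ξ * u ξ ≤ (1+ε)*(1+ε) :=
      mul_le_mul h.2 h.2 (by linarith [h.1]) (by linarith [hε0])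
    nlinarith [h2]
  have ha0 : ∀ ξ : sphere (0 : EuclideanSpace ℝ (Fin (d+1))) 1, (0:ℝ) < (u ξ)^2 := by
    intro ξ
    have h := hub ξ
    have hpos : (0:ℝ) < u ξ := by linarith [h.1]
    exact pow_pos hpos 2
  -- continuity of integrands
  have hu_cont : Continuous (fun ξ : sphere (0 : EuclideanSpace ℝ (Fin (d+1))) 1 => u ξ) := by
    have : (fun ξ : sphere (0 : EuclideanSpace ℝ (Fin (d+1))) 1 => u ξ)
        = fun ξ => 1 + ε * X ξ := funext huX
    rw [this]
    exact continuous_const.add (continuous_const.mul hXcont)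
  have hEntC : Continuous (fun ξ : sphere (0 : EuclideanSpace ℝ (Fin (d+1))) 1 =>
      (u ξ)^2 * Real.log ((u ξ)^2 / (1 + ε^2*V))) := by
    refine (hu_cont.pow 2).mul (Continuous.log ((hu_cont.pow 2).div_const _) ?_)
    intro ξ
    exact ne_of_gt (div_pos (ha0 ξ) hm0)
  -- entropy lower bound
  have hEnt : 2*ε^2*V/(1+ε)^2 ≤
      ∫ ξ, (u ξ)^2 * Real.log ((u ξ)^2 / (1 + ε^2*V)) ∂μ := by
    have isub : Integrable (fun ξ : sphere (0 : EuclideanSpace ℝ (Fin (d+1))) 1 =>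
        (u ξ)^2 - (1 + ε^2*V)) μ := hInt _ ((hu_cont.pow 2).sub continuous_const)
    have isq : Integrable (fun ξ : sphere (0 : EuclideanSpace ℝ (Fin (d+1))) 1 =>
        ((u ξ)^2 - (1 + ε^2*V))^2 / (2*(1+ε)^2)) μ :=
      hInt _ ((((hu_cont.pow 2).sub continuous_const).pow 2).div_const _)
    have hlhs : Integrable (fun ξ : sphere (0 : EuclideanSpace ℝ (Fin (d+1))) 1 =>
        ((u ξ)^2 - (1 + ε^2*V)) + ((u ξ)^2 - (1 + ε^2*V))^2 / (2*(1+ε)^2)) μ := isub.add isq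
    have hrhs := hInt _ hEntC
    have hptw : ∀ ξ : sphere (0 : EuclideanSpace ℝ (Fin (d+1))) 1,
        ((u ξ)^2 - (1 + ε^2*V)) + ((u ξ)^2 - (1 + ε^2*V))^2 / (2*(1+ε)^2)
          ≤ (u ξ)^2 * Real.log ((u ξ)^2 / (1 + ε^2*V)) := fun ξ =>
      SphereLS.ent_pointwise (ha0 ξ) hm0 (haM ξ) hmM
    have hmono := integral_mono hlhs hrhs hptw
    have hsplit : ∫ ξ, (((u ξ)^2 - (1 + ε^2*V)) + ((u ξ)^2 - (1 + ε^2*V))^2 / (2*(1+ε)^2)) ∂μ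
        = (∫ ξ, ((u ξ)^2 - (1 + ε^2*V)) ∂μ)
          + ∫ ξ, ((u ξ)^2 - (1 + ε^2*V))^2 / (2*(1+ε)^2) ∂μ := integral_add isub isq
    have e1 : ∫ ξ, ((u ξ)^2 - (1 + ε^2*V)) ∂μ = 0 := by
      rw [integral_sub (hInt (fun ξ => (u ξ)^2) (hu_cont.pow 2)) (integrable_const _), hm, integral_const]
      simp
    have e2 : ∫ ξ, ((u ξ)^2 - (1 + ε^2*V))^2 / (2*(1+ε)^2) ∂μ
        = (4*ε^2*V + ε^4*(T - V^2)) / (2*(1+ε)^2) := by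
      rw [integral_div, hQ]
    rw [hsplit, e1, e2] at hmono
    have hfinal : 2*ε^2*V/(1+ε)^2 ≤ 0 + (4*ε^2*V + ε^4*(T - V^2)) / (2*(1+ε)^2) := by
      have hnn : (0:ℝ) ≤ ε^4*(T - V^2)*(1+ε)^2 :=
        mul_nonneg (mul_nonneg (pow_nonneg hε0.le 4) (sub_nonneg.2 hTV)) (sq_nonneg (1+ε))
      rw [zero_add, div_le_div_iff₀ (by positivity) (by positivity)]
      nlinarith [hnn]
    linarith
  -- the quantitative choice of ε
  have hMlt : c*d*(1+ε)^2 < 2 := by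
    rcases le_or_gt (c*(d:ℝ)) 0 with h|h
    · nlinarith [hM0]
    · nlinarith [hε0, hεhalf, hε8, hcd, mul_pos h hε0, sq_nonneg ε]
  have hstrict : c * (ε^2*(1-V)) < 2*ε^2*V/(1+ε)^2 := by
    have hD : (0:ℝ) < (d:ℝ)+1 := by positivity
    have expand : 2*ε^2*V/(1+ε)^2 - c * (ε^2*(1-V))
        = (ε^2/(((d:ℝ)+1)*(1+ε)^2)) * (2 - c*(d:ℝ)*(1+ε)^2) := by
      rw [hVval]
      field_simp
      ring
    have hpos : (0:ℝ) < (ε^2/(((d:ℝ)+1)*(1+ε)^2)) * (2 - c*(d:ℝ)*(1+ε)^2) :=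
      mul_pos (by positivity) (by linarith)
    linarith
  -- conclusion
  refine ⟨u, ?_, ?_, ?_, ?_⟩
  · rw [hudef]; exact SphereLS.contDiff_affine ε v
  · have hv_mem : v ∈ sphere (0 : EuclideanSpace ℝ (Fin (d+1))) 1 := by
      rw [mem_sphere_iff_norm, sub_zero]; exact hvnorm
    have hnv_mem : -v ∈ sphere (0 : EuclideanSpace ℝ (Fin (d+1))) 1 := by
      rw [mem_sphere_iff_norm, sub_zero, norm_neg]; exact hvnorm
    refine ⟨v, hv_mem, -v, hnv_mem, ?_⟩
    have hvv : (inner ℝ v v : ℝ) = 1 := by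
      rw [real_inner_self_eq_norm_mul_norm, hvnorm]; norm_num
    rw [hudef]
    simp only [inner_neg_right, hvv]
    intro hcon
    nlinarith [hε0]
  · rw [hG]
    have : V < 1 := by
      rw [hVval, div_lt_one (by positivity)]
      linarith
    exact mul_pos (pow_pos hε0 2) (by linarith)
  · rw [hm, hG]
    linarith [hEnt, hstrict]
end
end

section
/- Discriminant lemma: let d ≥ 1 and let p satisfy 1 < p < 2d/(d−2) if d ≥ 3, or 1 < p < ∞ if d = 1 or d = 2, with p ≠ 2. Set A := (p−1)² (d−1)²/(d+2)² − p + 2 and B := p − 3 − d(p−1)/(d+2). Then B² − 4A > 0, and consequently there exists β ∈ ℝ, β ≠ 0, such that A β² + B β + 1 < 0. -/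
/-!
The discriminant of `A β² + B β + 1` has the closed form `4d(p-1)(2d - (d-2)p)/(d+2)²`, which is
positive exactly in the subcritical range `(d-2)p < 2d`. A real quadratic with positive discriminant
is negative somewhere, and since its value at `0` is `1`, it is negative at some `β ≠ 0`.
-/

theorem exists_ne_zero_quadratic_neg_of_discrim_pos {K : Type*} [Field K] [LinearOrder K]
    [IsStrictOrderedRing K] {a b c : K} (hc : 0 ≤ c) (h : 0 < discrim a b c) :
    ∃ x : K, x ≠ 0 ∧ a * x ^ 2 + b * x + c < 0 := by
  by_contra! hnonneg
  refine h.not_ge (discrim_le_zero fun x => ?_)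
  rcases eq_or_ne x 0 with rfl | hx
  · simpa using hc
  · simpa [sq] using hnonneg x hx

theorem sub_two_mul_lt_two_mul_of_subcritical {d : ℕ} {p : ℝ} (hp : 0 < p)
    (h : 3 ≤ d → p < 2 * d / ((d : ℝ) - 2)) : ((d : ℝ) - 2) * p < 2 * d := by
  rcases le_or_gt 3 d with hd | hd
  · have hd2 : (0 : ℝ) < d - 2 := by
      have : (3 : ℝ) ≤ d := by exact_mod_cast hd
      linarith
    simpa [mul_comm, lt_div_iff₀ hd2] using h hd
  · interval_cases d <;> norm_num <;> linarith

noncomputable section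

namespace Discriminant

def A (d p : ℝ) : ℝ := (p - 1) ^ 2 * (d - 1) ^ 2 / (d + 2) ^ 2 - p + 2

def B (d p : ℝ) : ℝ := p - 3 - d * (p - 1) / (d + 2)

theorem discrim_A_B_one {d : ℝ} (hd : d + 2 ≠ 0) (p : ℝ) :
    discrim (A d p) (B d p) 1 = 4 * d * (p - 1) * (2 * d - (d - 2) * p) / (d + 2) ^ 2 := by
  rw [discrim, A, B]
  field_simp
  ring

theorem discrim_A_B_one_pos {d p : ℝ} (hd : 0 < d) (hp : 1 < p) (hsub : (d - 2) * p < 2 * d) :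
    0 < discrim (A d p) (B d p) 1 := by
  rw [discrim_A_B_one (by positivity)]
  have hp' : 0 < p - 1 := by linarith
  have hsub' : 0 < 2 * d - (d - 2) * p := by linarith
  positivity

end Discriminant

end

open Discriminant in
theorem discriminant_lemma_general (d : ℕ) (hd : 1 ≤ d) (p : ℝ) (hp1 : 1 < p)
    (hp3 : 3 ≤ d → p < 2 * d / ((d : ℝ) - 2)) :
    (p - 3 - (d : ℝ) * (p - 1) / ((d : ℝ) + 2)) ^ 2 -
        4 * ((p - 1) ^ 2 * ((d : ℝ) - 1) ^ 2 / ((d : ℝ) + 2) ^ 2 - p + 2) > 0 ∧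
      ∃ β : ℝ, β ≠ 0 ∧
        ((p - 1) ^ 2 * ((d : ℝ) - 1) ^ 2 / ((d : ℝ) + 2) ^ 2 - p + 2) * β ^ 2 +
            (p - 3 - (d : ℝ) * (p - 1) / ((d : ℝ) + 2)) * β + 1 < 0 := by
  have hsub := sub_two_mul_lt_two_mul_of_subcritical (by linarith) hp3
  have hpos : 0 < discrim (A d p) (B d p) 1 :=
    discrim_A_B_one_pos (by exact_mod_cast hd) hp1 hsub
  refine ⟨by simpa [discrim, A, B] using hpos, ?_⟩
  exact exists_ne_zero_quadratic_neg_of_discrim_pos zero_le_one hpos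

/-- Discriminant lemma: with `A = (p−1)²(d−1)²/(d+2)² − p + 2` and
`B = p − 3 − d(p−1)/(d+2)`, one has `B² − 4A > 0`, hence there is `β ≠ 0`
with `A β² + B β + 1 < 0`. -/
theorem discriminant_lemma (d : ℕ) (hd : 1 ≤ d) (p : ℝ) (hp1 : 1 < p) (hp2 : p ≠ 2)
    (hp3 : 3 ≤ d → p < 2 * d / ((d : ℝ) - 2)) :
    (p - 3 - (d : ℝ) * (p - 1) / ((d : ℝ) + 2)) ^ 2 -
        4 * ((p - 1) ^ 2 * ((d : ℝ) - 1) ^ 2 / ((d : ℝ) + 2) ^ 2 - p + 2) > 0 ∧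
      ∃ β : ℝ, β ≠ 0 ∧
        ((p - 1) ^ 2 * ((d : ℝ) - 1) ^ 2 / ((d : ℝ) + 2) ^ 2 - p + 2) * β ^ 2 +
            (p - 3 - (d : ℝ) * (p - 1) / ((d : ℝ) + 2)) * β + 1 < 0 :=
  discriminant_lemma_general d hd p hp1 hp3
end

section
/- Decomposition identity: let d ≥ 2 and let p satisfy 2 < p < (2d² + 1)/(d−1)², and set α := 1 − (p−1)(d−1)²/(d(d+2)). Then α > 0, and for all real numbers a, b and all c > 0, a² + (p−1)(d/(d+2)) b⁴/c² − 2(p−1)((d−1)/(d+2)) b² a / c = α a² + ((p−1)/(d+2)) ( ((d−1)/√d) a − √d b²/c )²; in particular the left-hand side is ≥ α a². -/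
/-!
Writing `s = b² / c`, the left-hand side is a quadratic form in `(a, s)`; completing the square
leaves `α a²`, and `α > 0` unfolds to `p (d - 1)² < 2 d² + 1`.
-/

open Real

noncomputable def fisherAlpha (d p : ℝ) : ℝ :=
  1 - (p - 1) * (d - 1) ^ 2 / (d * (d + 2))

lemma fisherAlpha_pos_iff {d p : ℝ} (hd : 0 < d) (hd1 : d ≠ 1) :
    0 < fisherAlpha d p ↔ p < (2 * d ^ 2 + 1) / (d - 1) ^ 2 := by
  have hsq : 0 < (d - 1) ^ 2 := by positivity [sub_ne_zero.2 hd1]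
  rw [fisherAlpha, sub_pos, div_lt_one (by positivity), lt_div_iff₀ hsq]
  constructor <;> intro h <;> linarith

lemma sq_div_sqrt_mul_sub_sqrt_mul {d : ℝ} (hd : 0 < d) (a s : ℝ) :
    ((d - 1) / √d * a - √d * s) ^ 2 =
      (d - 1) ^ 2 / d * a ^ 2 + d * s ^ 2 - 2 * (d - 1) * a * s := by
  have hsqrt : √d ^ 2 = d := sq_sqrt hd.le
  field_simp
  rw [hsqrt]
  ring

lemma sq_add_mul_sq_sub_eq_completed_square {d : ℝ} (hd : 0 < d) (q e a s : ℝ) :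
    a ^ 2 + q * (d / e) * s ^ 2 - 2 * q * ((d - 1) / e) * s * a =
      (1 - q * (d - 1) ^ 2 / (d * e)) * a ^ 2 + q / e * ((d - 1) / √d * a - √d * s) ^ 2 := by
  rw [sq_div_sqrt_mul_sub_sqrt_mul hd]
  ring

lemma remainder_le_sq_add_mul_sq_sub {d q e : ℝ} (hd : 0 < d) (hq : 0 ≤ q) (he : 0 < e)
    (a s : ℝ) :
    (1 - q * (d - 1) ^ 2 / (d * e)) * a ^ 2 ≤
      a ^ 2 + q * (d / e) * s ^ 2 - 2 * q * ((d - 1) / e) * s * a := by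
  rw [sq_add_mul_sq_sub_eq_completed_square hd]
  exact le_add_of_nonneg_right (by positivity)

/-- Decomposition identity for the integrand in the Fisher information inequality,
with `α = 1 − (p−1)(d−1)²/(d(d+2)) > 0`. -/
theorem decomposition_identity (d : ℕ) (hd : 2 ≤ d) (p : ℝ) (hp1 : 2 < p)
    (hp2 : p < (2 * (d : ℝ) ^ 2 + 1) / ((d : ℝ) - 1) ^ 2) :
    0 < 1 - (p - 1) * ((d : ℝ) - 1) ^ 2 / ((d : ℝ) * ((d : ℝ) + 2)) ∧
    ∀ a b c : ℝ, 0 < c →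
      (a ^ 2 + (p - 1) * ((d : ℝ) / ((d : ℝ) + 2)) * b ^ 4 / c ^ 2 -
            2 * (p - 1) * (((d : ℝ) - 1) / ((d : ℝ) + 2)) * b ^ 2 * a / c =
          (1 - (p - 1) * ((d : ℝ) - 1) ^ 2 / ((d : ℝ) * ((d : ℝ) + 2))) * a ^ 2 +
            ((p - 1) / ((d : ℝ) + 2)) *
              ((((d : ℝ) - 1) / Real.sqrt d) * a - Real.sqrt d * b ^ 2 / c) ^ 2) ∧
        a ^ 2 + (p - 1) * ((d : ℝ) / ((d : ℝ) + 2)) * b ^ 4 / c ^ 2 -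
            2 * (p - 1) * (((d : ℝ) - 1) / ((d : ℝ) + 2)) * b ^ 2 * a / c ≥
          (1 - (p - 1) * ((d : ℝ) - 1) ^ 2 / ((d : ℝ) * ((d : ℝ) + 2))) * a ^ 2 := by
  have hd2 : (2 : ℝ) ≤ d := by exact_mod_cast hd
  have hd0 : (0 : ℝ) < d := by linarith
  have hd1 : (d : ℝ) ≠ 1 := by linarith
  have hp : 0 ≤ p - 1 := by linarith
  refine ⟨(fisherAlpha_pos_iff hd0 hd1).2 hp2, fun a b c _ => ⟨?_, ?_⟩⟩
  · convert sq_add_mul_sq_sub_eq_completed_square hd0 (p - 1) ((d : ℝ) + 2) a (b ^ 2 / c)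
      using 2 <;> ring
  · convert remainder_le_sq_add_mul_sq_sub (e := (d : ℝ) + 2) hd0 hp (by linarith) a (b ^ 2 / c)
      using 2 <;> ring
end
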